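/- Let Q be a real quadratic form on a finite-dimensional vector space V, and α a nonzero linear functional on V with kernel K. If Q restricted to K is positive definite, then there exists c₀ > 0 such that for all c ≥ c₀, the quadratic form Q + c·α² is positive definite on all of V. -/

import Mathlib

/-!
Choose `w` with `α w = 1` that is `Q`-orthogonal to `K`; it exists because `Q` is anisotropic on
`K`, so `K` is complementary to its `Q`-orthogonal. Writing `v = k + t • w` with `k ∈ K` and
`t = α v`, we get `Q v + c t² = Q k + t² (Q w + c)`, which is positive for `v ≠ 0` as soon as
`Q w + c > 0`.
-/

open LinearMap

namespace QuadraticMap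

variable {𝕜 V : Type*} [AddCommGroup V]

theorem isCompl_orthogonal_polarBilin [Field 𝕜] [NeZero (2 : 𝕜)] [Module 𝕜 V]
    [FiniteDimensional 𝕜 V] (Q : QuadraticMap 𝕜 V 𝕜) {K : Submodule 𝕜 V}
    (hQ : ∀ v ∈ K, Q v = 0 → v = 0) :
    IsCompl K (BilinForm.orthogonal Q.polarBilin K) := by
  refine (BilinForm.isCompl_orthogonal_iff_disjoint
    fun x y h ↦ by rwa [polarBilin_apply_apply, polar_comm]).2 ?_
  refine Submodule.disjoint_def.2 fun v hvK hv ↦ hQ v hvK ?_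
  have h2Q : 2 • Q v = 0 := polar_self Q v ▸ hv v hvK
  simpa [two_ne_zero] using h2Q

theorem exists_apply_eq_one_polar_ker_eq_zero [Field 𝕜] [NeZero (2 : 𝕜)] [Module 𝕜 V]
    [FiniteDimensional 𝕜 V] (Q : QuadraticMap 𝕜 V 𝕜) {α : V →ₗ[𝕜] 𝕜} (hα : α ≠ 0)
    (hQ : ∀ v ∈ ker α, Q v = 0 → v = 0) :
    ∃ w, α w = 1 ∧ ∀ k ∈ ker α, polar Q k w = 0 := by
  obtain ⟨v, hv⟩ : ∃ v, α v ≠ 0 := by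
    by_contra! h
    exact hα (LinearMap.ext h)
  have hmem : (α v)⁻¹ • v ∈ ker α ⊔ BilinForm.orthogonal Q.polarBilin (ker α) :=
    (isCompl_orthogonal_polarBilin Q hQ).codisjoint.eq_top ▸ Submodule.mem_top
  obtain ⟨k, hk, w, hw, hkw⟩ := Submodule.mem_sup.1 hmem
  refine ⟨w, ?_, hw⟩
  have : α k + α w = 1 := by rw [← map_add, hkw, map_smul, smul_eq_mul, inv_mul_cancel₀ hv]
  rwa [mem_ker.1 hk, zero_add] at this

theorem apply_eq_add_sq_mul_of_polar_ker_eq_zero [CommRing 𝕜] [Module 𝕜 V]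
    (Q : QuadraticMap 𝕜 V 𝕜) {α : V →ₗ[𝕜] 𝕜} {w : V} (hαw : α w = 1)
    (hw : ∀ k ∈ ker α, polar Q k w = 0) (v : V) :
    Q v = Q (v - α v • w) + α v ^ 2 * Q w := by
  have hk : v - α v • w ∈ ker α := by simp [hαw]
  conv_lhs => rw [← sub_add_cancel v (α v • w)]
  rw [QuadraticMap.map_add Q, polar_smul_right, hw _ hk, QuadraticMap.map_smul, smul_zero,
    add_zero, smul_eq_mul, pow_two]

end QuadraticMap

open QuadraticMap in
/-- If the quadratic form `Q` is positive definite on the kernel of a nonzero linear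
functional `α`, then `Q + c·α²` is positive definite on all of `V` for all
sufficiently large `c > 0`. -/
theorem stmt_14 (V : Type*) [AddCommGroup V] [Module ℝ V] [FiniteDimensional ℝ V]
    (Q : QuadraticForm ℝ V) (α : V →ₗ[ℝ] ℝ) (hα : α ≠ 0)
    (hQ : ∀ v ∈ LinearMap.ker α, v ≠ 0 → 0 < Q v) :
    ∃ c₀ > (0 : ℝ), ∀ c ≥ c₀, ∀ v : V, v ≠ 0 → 0 < Q v + c * (α v) ^ 2 := by
  have hQ₀ : ∀ v ∈ ker α, 0 ≤ Q v := fun v hv ↦ by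
    rcases eq_or_ne v 0 with rfl | hv0
    · simp
    · exact (hQ v hv hv0).le
  obtain ⟨w, hαw, hw⟩ := exists_apply_eq_one_polar_ker_eq_zero Q hα
    fun v hv hQv ↦ by_contra fun hv0 ↦ (hQ v hv hv0).ne' hQv
  refine ⟨|Q w| + 1, by positivity, fun c hc v hv ↦ ?_⟩
  have hk : v - α v • w ∈ ker α := by simp [hαw]
  have hcw : 0 < Q w + c := by linarith [neg_abs_le (Q w)]
  rw [apply_eq_add_sq_mul_of_polar_ker_eq_zero Q hαw hw v]
  rcases eq_or_ne (α v) 0 with hαv | hαv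
  · simpa [hαv] using hQ v (mem_ker.2 hαv) hv
  · linarith [hQ₀ _ hk, mul_pos (sq_pos_of_ne_zero hαv) hcw]
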